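/- Let E = EuclideanSpace ℝ (Fin 3) and x ∈ E. Let u : E → ℝ be twice continuously differentiable on a neighborhood of x, and let n : E → E be differentiable at x with ‖n y‖ = 1 for all y in a neighborhood of x and with fderiv ℝ n x (n x) = 0. Suppose u is extended constant along n, i.e. ⟪∇u(y), n(y)⟫ = 0 for all y in a neighborhood of x. Then the surface Laplacian equals the ordinary Laplacian at x: trace(fderiv ℝ (fun y => ∇u(y) - ⟪n y, ∇u(y)⟫ • n y) x) - ⟪fderiv ℝ (fun y => ∇u(y) - ⟪n y, ∇u(y)⟫ • n y) x (n x), n x⟫ = trace(fderiv ℝ (fun y => ∇u y) x). -/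

import Mathlib

/-! Near `x` the constraint `⟪∇u, n⟫ = 0` makes the tangential gradient coincide with `∇u`, so
both have the same derivative at `x`. Differentiating the constraint in the direction `n x` gives
`⟪D∇u(n), n⟫ + ⟪∇u, Dn(n)⟫ = 0`, and `Dn(n) = 0` kills the second term; hence the normal-normal
Hessian term subtracted in the surface divergence vanishes as well. -/

section

variable {F : Type*} [NormedAddCommGroup F] [InnerProductSpace ℝ F]

theorem sub_inner_smul_eventuallyEq_of_inner_eventually_eq_zero {x : F} {g n : F → F}
    (h : ∀ᶠ y in nhds x, inner ℝ (g y) (n y) = (0 : ℝ)) :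
    (fun y => g y - inner ℝ (n y) (g y) • n y) =ᶠ[nhds x] g := by
  filter_upwards [h] with y hy
  rw [real_inner_comm, hy, zero_smul, sub_zero]

theorem inner_fderiv_apply_self_eq_zero_of_inner_eventually_eq_zero {x : F} {g n : F → F}
    (hg : DifferentiableAt ℝ g x) (hn : DifferentiableAt ℝ n x)
    (h : ∀ᶠ y in nhds x, inner ℝ (g y) (n y) = (0 : ℝ)) (hnn : fderiv ℝ n x (n x) = 0) :
    inner ℝ (fderiv ℝ g x (n x)) (n x) = (0 : ℝ) := by
  have hzero : (fun y => inner ℝ (g y) (n y)) =ᶠ[nhds x] fun _ => (0 : ℝ) := h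
  have hderiv : fderiv ℝ (fun y => inner ℝ (g y) (n y)) x (n x) = (0 : ℝ) := by
    rw [hzero.fderiv_eq, fderiv_const_apply, zero_apply]
  rwa [fderiv_inner_apply ℝ hg hn, hnn, inner_zero_right, zero_add] at hderiv

theorem ContDiffAt.differentiableAt_gradient [CompleteSpace F] {u : F → ℝ} {x : F}
    {k : WithTop ℕ∞} (hu : ContDiffAt ℝ k u x) (hk : 2 ≤ k) :
    DifferentiableAt ℝ (gradient u) x :=
  (InnerProductSpace.toDual ℝ F).symm.differentiable.differentiableAt.comp x
    ((hu.fderiv_right (by simpa [one_add_one_eq_two] using hk)).differentiableAt one_ne_zero)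

end

theorem surface_laplacian_eq_laplacian_general
    (x : EuclideanSpace ℝ (Fin 3))
    (u : EuclideanSpace ℝ (Fin 3) → ℝ)
    (hu : ContDiffAt ℝ 2 u x)
    (n : EuclideanSpace ℝ (Fin 3) → EuclideanSpace ℝ (Fin 3))
    (hn_diff : DifferentiableAt ℝ n x)
    (hnn : fderiv ℝ n x (n x) = 0)
    (hconst : ∀ᶠ y in nhds x, (inner ℝ (gradient u y) (n y) : ℝ) = 0) :
    LinearMap.trace ℝ (EuclideanSpace ℝ (Fin 3))
        (fderiv ℝ (fun y => gradient u y - (inner ℝ (n y) (gradient u y) : ℝ) • n y) x).toLinearMap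
      - (inner ℝ (fderiv ℝ (fun y => gradient u y - (inner ℝ (n y) (gradient u y) : ℝ) • n y) x (n x))
          (n x) : ℝ)
    = LinearMap.trace ℝ (EuclideanSpace ℝ (Fin 3))
        (fderiv ℝ (fun y => gradient u y) x).toLinearMap := by
  rw [(sub_inner_smul_eventuallyEq_of_inner_eventually_eq_zero hconst).fderiv_eq,
    inner_fderiv_apply_self_eq_zero_of_inner_eventually_eq_zero
      (hu.differentiableAt_gradient le_rfl) hn_diff hconst hnn, sub_zero]

/-- Section 2.2 of the paper: under the constraint `⟪∇u, n⟫ = 0` near `x`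
(`u` extended constantly along the normal), the surface Laplacian equals
the ordinary Laplacian: `Δ_Γu = Δu`. -/
theorem surface_laplacian_eq_laplacian
    (x : EuclideanSpace ℝ (Fin 3))
    (u : EuclideanSpace ℝ (Fin 3) → ℝ)
    (hu : ContDiffAt ℝ 2 u x)
    (n : EuclideanSpace ℝ (Fin 3) → EuclideanSpace ℝ (Fin 3))
    (hn_diff : DifferentiableAt ℝ n x)
    (hn_norm : ∀ᶠ y in nhds x, ‖n y‖ = 1)
    (hnn : fderiv ℝ n x (n x) = 0)
    (hconst : ∀ᶠ y in nhds x, (inner ℝ (gradient u y) (n y) : ℝ) = 0) :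
    LinearMap.trace ℝ (EuclideanSpace ℝ (Fin 3))
        (fderiv ℝ (fun y => gradient u y - (inner ℝ (n y) (gradient u y) : ℝ) • n y) x).toLinearMap
      - (inner ℝ (fderiv ℝ (fun y => gradient u y - (inner ℝ (n y) (gradient u y) : ℝ) • n y) x (n x))
          (n x) : ℝ)
    = LinearMap.trace ℝ (EuclideanSpace ℝ (Fin 3))
        (fderiv ℝ (fun y => gradient u y) x).toLinearMap :=
  surface_laplacian_eq_laplacian_general x u hu n hn_diff hnn hconst
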